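/- Let C be a tensor field of type (1,1) on M_n with components C_i^k, and let ιC denote the vertical vector field on T(M_n) with components (0, y^i C_i^k) in induced coordinates. Then the Lie derivative of the synectic metric ^S g along ιC vanishes if and only if C = 0. -/

import Mathlib

open scoped BigOperators

noncomputable section

namespace Synectic

variable {n : ℕ}

/-- Partial derivative `∂_j f` of a real-valued function on `ℝⁿ` (global chart of `M_n`). -/
def pd (f : (Fin n → ℝ) → ℝ) (j : Fin n) (x : Fin n → ℝ) : ℝ :=
  fderiv ℝ f x (Pi.single j 1)

/-- Christoffel symbols `Γ^h_{ji}` of the metric `g` with inverse `ginv`. -/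
def Christoffel (g ginv : (Fin n → ℝ) → Fin n → Fin n → ℝ) (h j i : Fin n)
    (x : Fin n → ℝ) : ℝ :=
  (1 / 2) * ∑ s, ginv x h s *
    (pd (fun z => g z s i) j x + pd (fun z => g z j s) i x - pd (fun z => g z j i) s x)

/-- Covariant derivative `∇_j X^h` of a vector field. -/
def covVec (g ginv : (Fin n → ℝ) → Fin n → Fin n → ℝ)
    (X : (Fin n → ℝ) → Fin n → ℝ) (j h : Fin n) (x : Fin n → ℝ) : ℝ :=
  pd (fun z => X z h) j x + ∑ i, Christoffel g ginv h j i x * X x i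

/-- Covariant derivative `∇_j ω_i` of a covector field. -/
def covCov (g ginv : (Fin n → ℝ) → Fin n → Fin n → ℝ)
    (ω : (Fin n → ℝ) → Fin n → ℝ) (j i : Fin n) (x : Fin n → ℝ) : ℝ :=
  pd (fun z => ω z i) j x - ∑ k, Christoffel g ginv k j i x * ω x k

/-- Covariant derivative `∇_s a_{ji}` of a `(0,2)`-tensor field. -/
def cov2 (g ginv : (Fin n → ℝ) → Fin n → Fin n → ℝ)
    (a : (Fin n → ℝ) → Fin n → Fin n → ℝ) (s j i : Fin n) (x : Fin n → ℝ) : ℝ :=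
  pd (fun z => a z j i) s x - ∑ l, Christoffel g ginv l s j x * a x l i
    - ∑ l, Christoffel g ginv l s i x * a x j l

/-- The tensor `H^h_{ji} = (1/2) g^{hs} (∇_j a_{si} + ∇_i a_{js} - ∇_s a_{ji})`. -/
def Hcoef (g ginv a : (Fin n → ℝ) → Fin n → Fin n → ℝ) (h j i : Fin n)
    (x : Fin n → ℝ) : ℝ :=
  (1 / 2) * ∑ s, ginv x h s *
    (cov2 g ginv a j s i x + cov2 g ginv a i j s x - cov2 g ginv a s j i x)

/-- Components `R_{kji}{}^h` of the Riemann curvature tensor of `g`. -/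
def Riem (g ginv : (Fin n → ℝ) → Fin n → Fin n → ℝ) (k j i h : Fin n)
    (x : Fin n → ℝ) : ℝ :=
  pd (fun z => Christoffel g ginv h j i z) k x - pd (fun z => Christoffel g ginv h k i z) j x
    + ∑ m, Christoffel g ginv m j i x * Christoffel g ginv h k m x
    - ∑ m, Christoffel g ginv m k i x * Christoffel g ginv h j m x

/-- The covector field `X_i = g_{ih} X^h` associated with a vector field `X`. -/
def lower (g : (Fin n → ℝ) → Fin n → Fin n → ℝ) (X : (Fin n → ℝ) → Fin n → ℝ)
    (x : Fin n → ℝ) (i : Fin n) : ℝ :=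
  ∑ h, g x i h * X x h

/-- A point of the tangent bundle `T(M_n)` in induced coordinates `(xʰ, yʰ)`. -/
abbrev TPt (n : ℕ) := (Fin n → ℝ) × (Fin n → ℝ)

/-- Index type for induced coordinates on `T(M_n)`: `inl` = base indices, `inr` = fibre indices. -/
abbrev Idx (n : ℕ) := Fin n ⊕ Fin n

/-- Coordinate directions on `T(M_n)`. -/
def eIdx : Idx n → TPt n
  | Sum.inl j => (Pi.single j 1, 0)
  | Sum.inr j => (0, Pi.single j 1)

/-- Partial derivative `∂_A f` on `T(M_n)` (`∂_j` for `A = inl j`, `∂_{j̄}` for `A = inr j`). -/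
def pdT (f : TPt n → ℝ) (A : Idx n) (p : TPt n) : ℝ :=
  fderiv ℝ f p (eIdx A)

/-- Covariant components of the synectic metric `^S g = ^C g + ^V a` on `T(M_n)`. -/
def synMetric (g a : (Fin n → ℝ) → Fin n → Fin n → ℝ) (p : TPt n) :
    Idx n → Idx n → ℝ
  | Sum.inl j, Sum.inl i => a p.1 j i + ∑ s, p.2 s * pd (fun z => g z j i) s p.1
  | Sum.inl j, Sum.inr i => g p.1 j i
  | Sum.inr j, Sum.inl i => g p.1 j i
  | Sum.inr _, Sum.inr _ => 0

/-- Contravariant components of the synectic metric. -/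
def synMetricInv (ginv a : (Fin n → ℝ) → Fin n → Fin n → ℝ) (p : TPt n) :
    Idx n → Idx n → ℝ
  | Sum.inl _, Sum.inl _ => 0
  | Sum.inl j, Sum.inr i => ginv p.1 j i
  | Sum.inr j, Sum.inl i => ginv p.1 j i
  | Sum.inr j, Sum.inr i =>
      ∑ s, p.2 s * pd (fun z => ginv z j i) s p.1
        - ∑ t, ∑ s, ginv p.1 j t * a p.1 t s * ginv p.1 s i

/-- Vertical lift `^V X` of a vector field, with components `(0, Xʰ)`. -/
def vlift (X : (Fin n → ℝ) → Fin n → ℝ) (p : TPt n) : Idx n → ℝ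
  | Sum.inl _ => 0
  | Sum.inr h => X p.1 h

/-- Complete lift `^C X` of a vector field, with components `(Xʰ, yˢ ∂_s Xʰ)`. -/
def clift (X : (Fin n → ℝ) → Fin n → ℝ) (p : TPt n) : Idx n → ℝ
  | Sum.inl h => X p.1 h
  | Sum.inr h => ∑ s, p.2 s * pd (fun z => X z h) s p.1

/-- Horizontal lift `^H X` of a vector field, with components `(Xʰ, -yˢ Γʰ_{si} Xⁱ)`. -/
def hlift (g ginv : (Fin n → ℝ) → Fin n → Fin n → ℝ)
    (X : (Fin n → ℝ) → Fin n → ℝ) (p : TPt n) : Idx n → ℝ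
  | Sum.inl h => X p.1 h
  | Sum.inr h => -∑ s, ∑ i, p.2 s * Christoffel g ginv h s i p.1 * X p.1 i

/-- Components of the Lie derivative `(𝓛_V G)_{AB}` of a metric `G` on `T(M_n)` along `V`. -/
def lieDerivT (G : TPt n → Idx n → Idx n → ℝ) (V : TPt n → Idx n → ℝ)
    (A B : Idx n) (p : TPt n) : ℝ :=
  ∑ C, (V p C * pdT (fun q => G q A B) C p
      + G p A C * pdT (fun q => V q C) B p
      + G p C B * pdT (fun q => V q C) A p)

/-- `V` is a Killing vector field of the metric `G` on `T(M_n)`. -/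
def IsKillingT (G : TPt n → Idx n → Idx n → ℝ) (V : TPt n → Idx n → ℝ) : Prop :=
  ∀ p A B, lieDerivT G V A B p = 0

/-- Christoffel symbols of a metric `G` (with inverse `Ginv`) on `T(M_n)`. -/
def ChristoffelT (G Ginv : TPt n → Idx n → Idx n → ℝ) (A B C : Idx n) (p : TPt n) : ℝ :=
  (1 / 2) * ∑ D, Ginv p A D *
    (pdT (fun q => G q D C) B p + pdT (fun q => G q B D) C p - pdT (fun q => G q B C) D p)

/-- Covariant derivative `∇_B ω_A` on `T(M_n)` of a covector field w.r.t. the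
Levi-Civita connection of `(G, Ginv)`. -/
def covCovT (G Ginv : TPt n → Idx n → Idx n → ℝ) (ω : TPt n → Idx n → ℝ)
    (B A : Idx n) (p : TPt n) : ℝ :=
  pdT (fun q => ω q A) B p - ∑ C, ChristoffelT G Ginv C B A p * ω p C

/-- Covariant derivative `∇_B V^A` on `T(M_n)` of a vector field w.r.t. a linear
connection given by its components `Conn^A_{BC}`. -/
def covVecT (Conn : Idx n → Idx n → Idx n → TPt n → ℝ) (V : TPt n → Idx n → ℝ)
    (B A : Idx n) (p : TPt n) : ℝ :=
  pdT (fun q => V q A) B p + ∑ C, Conn A B C p * V p C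

/-- Components `Γ̃^A_{BC}` of the metric connection `∇̃` of the synectic metric. -/
def GammaTilde (g ginv a : (Fin n → ℝ) → Fin n → Fin n → ℝ) :
    Idx n → Idx n → Idx n → TPt n → ℝ
  | Sum.inl h, Sum.inl j, Sum.inl i => fun p => Christoffel g ginv h j i p.1
  | Sum.inr h, Sum.inr j, Sum.inl i => fun p => Christoffel g ginv h j i p.1
  | Sum.inr h, Sum.inl j, Sum.inr i => fun p => Christoffel g ginv h j i p.1
  | Sum.inr h, Sum.inl j, Sum.inl i => fun p =>
      (∑ t, p.2 t * pd (fun z => Christoffel g ginv h j i z) t p.1)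
        + Hcoef g ginv a h j i p.1 - ∑ k, p.2 k * Riem g ginv k j i h p.1
  | _, _, _ => fun _ => 0

/-- Components `Γ̄^A_{BC}` of the metric connection `∇̄` of the complete lift metric `^C g`
(the horizontal lift `^H ∇` of the Levi-Civita connection of `g`). -/
def GammaBar (g ginv : (Fin n → ℝ) → Fin n → Fin n → ℝ) :
    Idx n → Idx n → Idx n → TPt n → ℝ
  | Sum.inl h, Sum.inl j, Sum.inl i => fun p => Christoffel g ginv h j i p.1
  | Sum.inr h, Sum.inr j, Sum.inl i => fun p => Christoffel g ginv h j i p.1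
  | Sum.inr h, Sum.inl j, Sum.inr i => fun p => Christoffel g ginv h j i p.1
  | Sum.inr h, Sum.inl j, Sum.inl i => fun p =>
      (∑ t, p.2 t * pd (fun z => Christoffel g ginv h j i z) t p.1)
        - ∑ k, p.2 k * Riem g ginv k j i h p.1
  | _, _, _ => fun _ => 0

/-- Vertical lift `^V H` of the `(1,2)`-tensor field `H`, as a difference of connections. -/
def vertH (g ginv a : (Fin n → ℝ) → Fin n → Fin n → ℝ) :
    Idx n → Idx n → Idx n → TPt n → ℝ
  | Sum.inr h, Sum.inl j, Sum.inl i => fun p => Hcoef g ginv a h j i p.1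
  | _, _, _ => fun _ => 0

/-- Covector field associated with a vector field `V` on `(T(M_n), ^S g)`. -/
def assocCov (g a : (Fin n → ℝ) → Fin n → Fin n → ℝ) (V : TPt n → Idx n → ℝ)
    (p : TPt n) (C : Idx n) : ℝ :=
  ∑ A, synMetric g a p C A * V p A

/-- The vertical vector field `ιC` with components `(0, yⁱ C_iᵏ)`. -/
def iotaT (C : (Fin n → ℝ) → Fin n → Fin n → ℝ) (p : TPt n) : Idx n → ℝ
  | Sum.inl _ => 0
  | Sum.inr k => ∑ i, p.2 i * C p.1 i k

/-- `X` is a Killing vector field of `(M_n, g)`: `∇_j X_i + ∇_i X_j = 0`. -/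
def IsKillingBase (g ginv : (Fin n → ℝ) → Fin n → Fin n → ℝ)
    (X : (Fin n → ℝ) → Fin n → ℝ) : Prop :=
  ∀ x j i, covCov g ginv (lower g X) j i x + covCov g ginv (lower g X) i j x = 0

/-- `V` is a harmonic vector field of `(T(M_n), ^S g)`: its associated covector field is
closed and coclosed w.r.t. the Levi-Civita connection of the synectic metric. -/
def IsHarmonicT (g ginv a : (Fin n → ℝ) → Fin n → Fin n → ℝ)
    (V : TPt n → Idx n → ℝ) : Prop :=
  (∀ p B A, covCovT (synMetric g a) (synMetricInv ginv a) (assocCov g a V) B A p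
      - covCovT (synMetric g a) (synMetricInv ginv a) (assocCov g a V) A B p = 0)
  ∧ (∀ p, ∑ B, ∑ A, synMetricInv ginv a p B A *
      covCovT (synMetric g a) (synMetricInv ginv a) (assocCov g a V) B A p = 0)

/-- `X` is a harmonic vector field of `(M_n, g)`: its associated `1`-form is closed and
coclosed. -/
def IsHarmonicBase (g ginv : (Fin n → ℝ) → Fin n → Fin n → ℝ)
    (X : (Fin n → ℝ) → Fin n → ℝ) : Prop :=
  (∀ x j i, covCov g ginv (lower g X) j i x - covCov g ginv (lower g X) i j x = 0)
  ∧ (∀ x, ∑ j, ∑ i, ginv x j i * covCov g ginv (lower g X) j i x = 0)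

/-- A vector field on `T(M_n)` is parallel w.r.t. a linear connection `Conn` if its covariant
derivative vanishes identically. -/
def IsParallelT (Conn : Idx n → Idx n → Idx n → TPt n → ℝ) (V : TPt n → Idx n → ℝ) : Prop :=
  ∀ p B A, covVecT Conn V B A p = 0

/-- `X` is parallel on `M_n`: `∇_j Xʰ = 0`. -/
def IsParallelBase (g ginv : (Fin n → ℝ) → Fin n → Fin n → ℝ)
    (X : (Fin n → ℝ) → Fin n → ℝ) : Prop :=
  ∀ x j h, covVec g ginv X j h x = 0

lemma pdT_const (c : ℝ) (A : Idx n) (p : TPt n) : pdT (fun _ => c) A p = 0 := by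
  simp [pdT]

/-- Derivative of a base function in a fibre direction vanishes. -/
lemma pdT_base_inr (f : (Fin n → ℝ) → ℝ) (hf : ContDiff ℝ (⊤ : ℕ∞) f) (k : Fin n) (p : TPt n) :
    pdT (fun q : TPt n => f q.1) (Sum.inr k) p = 0 := by
  have h : HasFDerivAt (fun q : TPt n => f q.1)
      ((fderiv ℝ f p.1).comp (ContinuousLinearMap.fst ℝ (Fin n → ℝ) (Fin n → ℝ))) p :=
    ((hf.differentiable (by simp) p.1).hasFDerivAt).comp p (hasFDerivAt_fst)
  rw [pdT, h.fderiv]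
  simp [eIdx]

/-- Key computation: the fibre derivative of the components of `ιC`. -/
lemma pdT_iota_inr (C : (Fin n → ℝ) → Fin n → Fin n → ℝ)
    (hC : ∀ i k, ContDiff ℝ (⊤ : ℕ∞) fun z => C z i k) (k i : Fin n) (p : TPt n) :
    pdT (fun q : TPt n => ∑ m, q.2 m * C q.1 m k) (Sum.inr i) p = C p.1 i k := by
  have h : ∀ m : Fin n, HasFDerivAt (fun q : TPt n => q.2 m * C q.1 m k)
      ((fun q : TPt n => q.2 m) p • ((fderiv ℝ (fun z => C z m k) p.1).comp
          (ContinuousLinearMap.fst ℝ (Fin n → ℝ) (Fin n → ℝ)))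
        + (fun q : TPt n => C q.1 m k) p •
          ((ContinuousLinearMap.proj m).comp
            (ContinuousLinearMap.snd ℝ (Fin n → ℝ) (Fin n → ℝ)))) p := by
    intro m
    have h1 : HasFDerivAt (fun q : TPt n => q.2 m)
        ((ContinuousLinearMap.proj m).comp
          (ContinuousLinearMap.snd ℝ (Fin n → ℝ) (Fin n → ℝ))) p :=
      (((ContinuousLinearMap.proj m).comp
          (ContinuousLinearMap.snd ℝ (Fin n → ℝ) (Fin n → ℝ)))).hasFDerivAt
    have h2 : HasFDerivAt (fun q : TPt n => C q.1 m k)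
        ((fderiv ℝ (fun z => C z m k) p.1).comp
          (ContinuousLinearMap.fst ℝ (Fin n → ℝ) (Fin n → ℝ))) p :=
      (((hC m k).differentiable (by simp) p.1).hasFDerivAt).comp p (hasFDerivAt_fst)
    exact h1.mul h2
  have hsum : HasFDerivAt (fun q : TPt n => ∑ m, q.2 m * C q.1 m k)
      (∑ m, ((fun q : TPt n => q.2 m) p • ((fderiv ℝ (fun z => C z m k) p.1).comp
          (ContinuousLinearMap.fst ℝ (Fin n → ℝ) (Fin n → ℝ)))
        + (fun q : TPt n => C q.1 m k) p •
          ((ContinuousLinearMap.proj m).comp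
            (ContinuousLinearMap.snd ℝ (Fin n → ℝ) (Fin n → ℝ))))) p :=
    HasFDerivAt.fun_sum (fun m _ => h m)
  rw [pdT, hsum.fderiv]
  simp [eIdx, Pi.single_apply]

/-- For a `(1,1)`-tensor field `C` on `M_n`, the Lie derivative of the
synectic metric `^S g` along the vertical vector field `ιC` (with components `(0, yⁱ C_iᵏ)`)
vanishes if and only if `C = 0`. -/
theorem lie_deriv_iota_vanishes_iff {n : ℕ}
    (g ginv a : (Fin n → ℝ) → Fin n → Fin n → ℝ)
    (hg : ∀ j i, ContDiff ℝ (⊤ : ℕ∞) fun z => g z j i)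
    (hgsymm : ∀ x j i, g x j i = g x i j)
    (hpos : ∀ (x v : Fin n → ℝ), v ≠ 0 → 0 < ∑ j, ∑ i, g x j i * v j * v i)
    (hginv : ∀ j i, ContDiff ℝ (⊤ : ℕ∞) fun z => ginv z j i)
    (hinv : ∀ x j k, ∑ i, g x j i * ginv x i k = if j = k then (1 : ℝ) else 0)
    (ha : ∀ j i, ContDiff ℝ (⊤ : ℕ∞) fun z => a z j i)
    (hasymm : ∀ x j i, a x j i = a x i j)
    (C : (Fin n → ℝ) → Fin n → Fin n → ℝ)
    (hC : ∀ i k, ContDiff ℝ (⊤ : ℕ∞) fun z => C z i k)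
    : (∀ p A B, lieDerivT (synMetric g a) (iotaT C) A B p = 0) ↔
      (∀ x i k, C x i k = 0) := by
  constructor
  · intro h
    -- Step 1: evaluate the (inl j, inr i) component of the Lie derivative.
    have key : ∀ (p : TPt n) (j i : Fin n), ∑ m, g p.1 j m * C p.1 i m = 0 := by
      intro p j i
      have hthis := h p (Sum.inl j) (Sum.inr i)
      rw [lieDerivT, Fintype.sum_sum_type] at hthis
      simp only [iotaT, synMetric] at hthis
      simp only [pdT_const, pdT_base_inr _ (hg j i), pdT_iota_inr C hC,
        zero_mul, mul_zero, add_zero, zero_add, Finset.sum_const_zero] at hthis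
      exact hthis
    -- Step 2: invert the metric.
    have hmul : ∀ (x : Fin n → ℝ) (h k : Fin n),
        ∑ j, ginv x h j * g x j k = if h = k then (1 : ℝ) else 0 := by
      intro x
      have hGG : (Matrix.of (g x)) * (Matrix.of (ginv x)) = 1 := by
        ext j k
        simpa [Matrix.mul_apply, Matrix.one_apply] using hinv x j k
      have hGG' : (Matrix.of (ginv x)) * (Matrix.of (g x)) = 1 :=
        mul_eq_one_comm.mp hGG
      intro hh k
      have := congrFun (congrFun hGG' hh) k
      simpa [Matrix.mul_apply, Matrix.one_apply] using this
    intro x i k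
    have step : ∑ j, ginv x k j * (∑ m, g x j m * C x i m) = C x i k := by
      simp_rw [Finset.mul_sum, ← mul_assoc]
      rw [Finset.sum_comm]
      have hterm : ∀ m, ∑ j, ginv x k j * g x j m * C x i m
          = (if k = m then (1 : ℝ) else 0) * C x i m := by
        intro m
        rw [← Finset.sum_mul, hmul x k m]
      simp_rw [hterm]
      simp
    have hzero : ∑ j, ginv x k j * (∑ m, g x j m * C x i m) = 0 := by
      have hk : ∀ j, ∑ m, g x j m * C x i m = 0 := fun j =>
        key ((x, 0) : TPt n) j i
      simp [hk]
    rw [← step, hzero]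
  · intro h0 p A B
    have hz : ∀ D : Idx n, (fun q : TPt n => iotaT C q D) = fun _ => (0 : ℝ) := by
      intro D
      funext q
      cases D with
      | inl s => rfl
      | inr m => simp [iotaT, h0]
    rw [lieDerivT]
    apply Finset.sum_eq_zero
    intro D _
    have hz0 : iotaT C p D = 0 := congrFun (hz D) p
    rw [hz D, hz0]
    simp only [pdT_const]
    ring

end Synectic
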